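/- Σ_{n≥0} (q;q^2)_n (aq;q^2)_n (aq)^n / (-aq;q)_{2n+1} = Σ_{n≥0} (-1)^n a^n q^{n(n+1)}, for |q|<1 and |a| suitably small (formal power series in a, q). -/

import Mathlib

open scoped BigOperators

/-- finite q-Pochhammer symbol `(x;q)_n = ∏_{j=0}^{n-1} (1 - x q^j)` -/
noncomputable def qPoch (x q : ℂ) (n : ℕ) : ℂ := ∏ j ∈ Finset.range n, (1 - x * q ^ j)

/-- infinite q-Pochhammer symbol `(x;q)_∞ = ∏_{j≥0} (1 - x q^j)` -/
noncomputable def qPochInf (x q : ℂ) : ℂ := ∏' j : ℕ, (1 - x * q ^ j)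

/-- Gaussian binomial coefficient in base q, zero outside `0 ≤ k ≤ m`. -/
noncomputable def qbinom (q : ℂ) (m k : ℤ) : ℂ :=
  if 0 ≤ k ∧ k ≤ m then
    qPoch q q m.toNat / (qPoch q q k.toNat * qPoch q q (m - k).toNat)
  else 0

/-!
Write `F b` and `Θ b = ∑ (-b)^n q^(n(n+1))` for the two sides with `a` replaced by a variable `b`.
Both solve the q-difference equation `f b = 1 - b q² f (b q²)`. For `Θ` this is a shift of the
summation index. For `F`, the terms `T b n` satisfy `T b n + b q² T (b q²) n = R n - R (n + 1)`
with `R n = T b n (1 - b² q^(2n+2)) / (1 - b q)`, `R 0 = 1` and `R n → 0`, so the combined series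
telescopes to `1`. Hence `d = F - Θ` satisfies `d b = -b q² d (b q²)`; being bounded by some `M`
on the disc `‖b‖ ≤ ‖a‖`, iteration gives `‖d a‖ ≤ ‖a‖^N M → 0`.
-/

open Finset Filter Topology

namespace LostNotebook

theorem qPoch_zero (x q : ℂ) : qPoch x q 0 = 1 := prod_range_zero _

theorem qPoch_succ (x q : ℂ) (n : ℕ) : qPoch x q (n + 1) = qPoch x q n * (1 - x * q ^ n) :=
  prod_range_succ _ _

theorem one_sub_mul_qPoch_mul (x q : ℂ) (n : ℕ) :
    (1 - x) * qPoch (x * q) q n = qPoch x q n * (1 - x * q ^ n) := by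
  rw [← qPoch_succ]
  simp only [qPoch, prod_range_succ', pow_succ', pow_zero, mul_one, mul_assoc, mul_comm (1 - x)]

theorem one_sub_ne_zero_of_norm_lt_one {z : ℂ} (hz : ‖z‖ < 1) : 1 - z ≠ 0 := by
  rw [sub_ne_zero]
  rintro rfl
  simp at hz

theorem norm_mul_le_norm_of_norm_le_one (x : ℂ) {w : ℂ} (hw : ‖w‖ ≤ 1) : ‖x * w‖ ≤ ‖x‖ := by
  rw [norm_mul]
  exact mul_le_of_le_one_right (norm_nonneg x) hw

theorem norm_mul_pow_le_norm (x : ℂ) {q : ℂ} (hq : ‖q‖ ≤ 1) (j : ℕ) : ‖x * q ^ j‖ ≤ ‖x‖ :=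
  norm_mul_le_norm_of_norm_le_one x (by rw [norm_pow]; exact pow_le_one₀ (norm_nonneg q) hq)

theorem one_sub_mul_pow_ne_zero {x q : ℂ} (hx : ‖x‖ < 1) (hq : ‖q‖ ≤ 1) (j : ℕ) :
    1 - x * q ^ j ≠ 0 :=
  one_sub_ne_zero_of_norm_lt_one ((norm_mul_pow_le_norm x hq j).trans_lt hx)

theorem qPoch_ne_zero {x q : ℂ} (hx : ‖x‖ < 1) (hq : ‖q‖ ≤ 1) (n : ℕ) : qPoch x q n ≠ 0 :=
  prod_ne_zero_iff.2 fun j _ => one_sub_mul_pow_ne_zero hx hq j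

theorem sum_norm_mul_pow_le (x : ℂ) {q : ℂ} (hq : ‖q‖ < 1) (n : ℕ) :
    ∑ j ∈ range n, ‖x * q ^ j‖ ≤ ‖x‖ / (1 - ‖q‖) := by
  simp_rw [norm_mul, norm_pow, ← mul_sum]
  rw [div_eq_mul_one_div]
  refine mul_le_mul_of_nonneg_left ?_ (norm_nonneg x)
  simpa using geom_sum_Ico_le_of_lt_one (m := 0) (n := n) (norm_nonneg q) hq

theorem norm_qPoch_le {x q : ℂ} {r : ℝ} (hx : ‖x‖ ≤ r) (hq : ‖q‖ < 1) (n : ℕ) :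
    ‖qPoch x q n‖ ≤ Real.exp (r / (1 - ‖q‖)) := by
  calc ‖qPoch x q n‖ = ∏ j ∈ range n, ‖1 - x * q ^ j‖ := norm_prod _ _
    _ ≤ ∏ j ∈ range n, Real.exp ‖x * q ^ j‖ := by
      refine prod_le_prod (fun _ _ => norm_nonneg _) fun j _ => ?_
      calc ‖1 - x * q ^ j‖ ≤ ‖x * q ^ j‖ + 1 := by
            simpa [add_comm] using norm_sub_le (1 : ℂ) (x * q ^ j)
        _ ≤ Real.exp ‖x * q ^ j‖ := Real.add_one_le_exp _
    _ = Real.exp (∑ j ∈ range n, ‖x * q ^ j‖) := (Real.exp_sum _ _).symm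
    _ ≤ Real.exp (r / (1 - ‖q‖)) := by
      refine Real.exp_le_exp.2 ((sum_norm_mul_pow_le x hq n).trans ?_)
      exact div_le_div_of_nonneg_right hx (sub_pos.2 hq).le

theorem exp_neg_div_le_one_sub {t ρ : ℝ} (ht₀ : 0 ≤ t) (ht : t ≤ ρ) (hρ : ρ < 1) :
    Real.exp (-(t / (1 - ρ))) ≤ 1 - t := by
  have h1t : 0 < 1 - t := by linarith
  calc Real.exp (-(t / (1 - ρ))) ≤ Real.exp (Real.log (1 - t)) := by
        have hlog : 1 - (1 - t)⁻¹ = -(t / (1 - t)) := by field_simp; ring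
        have hmono : t / (1 - t) ≤ t / (1 - ρ) :=
          div_le_div_of_nonneg_left ht₀ (sub_pos.2 hρ) (by linarith)
        rw [Real.exp_le_exp]
        linarith [Real.one_sub_inv_le_log_of_pos h1t]
    _ = 1 - t := Real.exp_log h1t

theorem exp_neg_le_norm_qPoch {x q : ℂ} {ρ : ℝ} (hx : ‖x‖ ≤ ρ) (hρ : ρ < 1) (hq : ‖q‖ < 1)
    (n : ℕ) : Real.exp (-(ρ / (1 - ‖q‖) / (1 - ρ))) ≤ ‖qPoch x q n‖ := by
  have hρ' : 0 < 1 - ρ := sub_pos.2 hρ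
  have hle : ∀ j, ‖x * q ^ j‖ ≤ ρ := fun j => (norm_mul_pow_le_norm x hq.le j).trans hx
  calc Real.exp (-(ρ / (1 - ‖q‖) / (1 - ρ)))
      ≤ Real.exp (∑ j ∈ range n, -(‖x * q ^ j‖ / (1 - ρ))) := by
        rw [Real.exp_le_exp, sum_neg_distrib, ← sum_div, neg_le_neg_iff]
        refine div_le_div_of_nonneg_right ((sum_norm_mul_pow_le x hq n).trans ?_) hρ'.le
        exact div_le_div_of_nonneg_right hx (sub_pos.2 hq).le
    _ = ∏ j ∈ range n, Real.exp (-(‖x * q ^ j‖ / (1 - ρ))) := Real.exp_sum _ _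
    _ ≤ ∏ j ∈ range n, (1 - ‖x * q ^ j‖) :=
        prod_le_prod (fun _ _ => (Real.exp_pos _).le)
          fun j _ => exp_neg_div_le_one_sub (norm_nonneg _) (hle j) hρ
    _ ≤ ∏ j ∈ range n, ‖1 - x * q ^ j‖ :=
        prod_le_prod (fun j _ => by linarith [hle j])
          fun j _ => by simpa using norm_sub_norm_le (1 : ℂ) (x * q ^ j)
    _ = ‖qPoch x q n‖ := (norm_prod _ _).symm

noncomputable def heineTerm (q b : ℂ) (n : ℕ) : ℂ :=
  qPoch q (q ^ 2) n * qPoch (b * q) (q ^ 2) n * (b * q) ^ n / qPoch (-(b * q)) q (2 * n + 1)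

noncomputable def heineRemainder (q b : ℂ) (n : ℕ) : ℂ :=
  heineTerm q b n * (1 - b ^ 2 * q ^ (2 * n + 2)) / (1 - b * q)

section

variable {q b : ℂ}

theorem heineTerm_succ (hq : ‖q‖ < 1) (hb : ‖b * q‖ < 1) (n : ℕ) :
    heineTerm q b (n + 1) * ((1 + b * q ^ (2 * n + 2)) * (1 + b * q ^ (2 * n + 3))) =
      heineTerm q b n * ((1 - q ^ (2 * n + 1)) * (1 - b * q ^ (2 * n + 1)) * (b * q)) := by
  have hb' : ‖-(b * q)‖ < 1 := by rwa [norm_neg]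
  have hD := qPoch_ne_zero hb' hq.le (2 * n + 1)
  have h₁ := one_sub_mul_pow_ne_zero hb' hq.le (2 * n + 1)
  have h₂ := one_sub_mul_pow_ne_zero hb' hq.le (2 * n + 1 + 1)
  rw [heineTerm, heineTerm, show 2 * (n + 1) + 1 = 2 * n + 1 + 1 + 1 by ring,
    qPoch_succ (-(b * q)), qPoch_succ (-(b * q)), qPoch_succ q, qPoch_succ (b * q),
    div_mul_eq_mul_div, div_mul_eq_mul_div, div_eq_div_iff (mul_ne_zero (mul_ne_zero hD h₁) h₂) hD]
  ring

theorem heineTerm_mul_sq (hq : ‖q‖ < 1) (hb : ‖b * q‖ < 1) (n : ℕ) :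
    heineTerm q (b * q ^ 2) n *
        ((1 - b * q) * (1 + b * q ^ (2 * n + 2)) * (1 + b * q ^ (2 * n + 3))) =
      heineTerm q b n *
        ((1 - b * q ^ (2 * n + 1)) * q ^ (2 * n) * (1 + b * q) * (1 + b * q ^ 2)) := by
  have hb' : ‖-(b * q)‖ < 1 := by rwa [norm_neg]
  have hbq : ‖-(b * q) * q * q‖ < 1 := ((norm_mul_le_norm_of_norm_le_one _ hq.le).trans
    (norm_mul_le_norm_of_norm_le_one _ hq.le)).trans_lt hb'
  have hD := qPoch_ne_zero hb' hq.le (2 * n + 1)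
  have hD' := qPoch_ne_zero hbq hq.le (2 * n + 1)
  have hB := one_sub_mul_qPoch_mul (b * q) (q ^ 2) n
  have hD₁ := one_sub_mul_qPoch_mul (-(b * q)) q (2 * n + 1)
  have hD₂ := one_sub_mul_qPoch_mul (-(b * q) * q) q (2 * n + 1)
  rw [heineTerm, heineTerm, show b * q ^ 2 * q = b * q * q ^ 2 by ring,
    show -(b * q * q ^ 2) = -(b * q) * q * q by ring, div_mul_eq_mul_div, div_mul_eq_mul_div,
    div_eq_div_iff hD' hD]
  linear_combination (qPoch q (q ^ 2) n * (b * q) ^ n * q ^ (2 * n)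
      * qPoch (-(b * q)) q (2 * n + 1) * (1 + b * q ^ (2 * n + 2)) * (1 + b * q ^ (2 * n + 3))) * hB
    - (qPoch q (q ^ 2) n * qPoch (b * q) (q ^ 2) n * (b * q) ^ n * (1 - b * q ^ (2 * n + 1))
      * q ^ (2 * n) * (1 + b * q)) * hD₂
    - (qPoch q (q ^ 2) n * qPoch (b * q) (q ^ 2) n * (b * q) ^ n * (1 - b * q ^ (2 * n + 1))
      * q ^ (2 * n) * (1 + b * q ^ (2 * n + 3))) * hD₁

theorem heineTerm_add_mul_heineTerm (hq : ‖q‖ < 1) (hb : ‖b * q‖ < 1) (n : ℕ) :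
    heineTerm q b n + b * q ^ 2 * heineTerm q (b * q ^ 2) n =
      heineRemainder q b n - heineRemainder q b (n + 1) := by
  have hb' : ‖-(b * q)‖ < 1 := by rwa [norm_neg]
  have hc := one_sub_ne_zero_of_norm_lt_one hb
  have h₁ := one_sub_mul_pow_ne_zero hb' hq.le (2 * n + 1)
  have h₂ := one_sub_mul_pow_ne_zero hb' hq.le (2 * n + 1 + 1)
  have hK : (1 - b * q) * (1 + b * q ^ (2 * n + 2)) * (1 + b * q ^ (2 * n + 3)) ≠ 0 := by
    refine mul_ne_zero (mul_ne_zero hc ?_) ?_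
    · convert h₁ using 1; ring
    · convert h₂ using 1; ring
  rw [← mul_left_inj' hK, heineRemainder, heineRemainder, ← sub_div, div_mul_eq_mul_div,
    eq_div_iff hc]
  linear_combination (1 - b * q) * (b * q ^ 2) * heineTerm_mul_sq hq hb n
    + (1 - b * q) * (1 - b ^ 2 * q ^ (2 * (n + 1) + 2)) * heineTerm_succ hq hb n

theorem heineRemainder_zero (hb : ‖b * q‖ < 1) : heineRemainder q b 0 = 1 := by
  have h₁ := one_sub_ne_zero_of_norm_lt_one hb
  have h₂ : 1 + b * q ≠ 0 := by
    simpa using one_sub_ne_zero_of_norm_lt_one (z := -(b * q)) (by rwa [norm_neg])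
  simp only [heineRemainder, heineTerm, mul_zero, zero_add, qPoch_succ, qPoch_zero, pow_zero,
    mul_one, one_mul, sub_neg_eq_add]
  rw [one_div_mul_eq_div, div_div, div_eq_one_iff_eq (mul_ne_zero h₂ h₁)]
  ring

end

noncomputable def heineSeries (q b : ℂ) : ℂ := ∑' n : ℕ, heineTerm q b n

noncomputable def partialThetaTerm (q b : ℂ) (n : ℕ) : ℂ :=
  (-1 : ℂ) ^ n * b ^ n * q ^ (n * (n + 1))

noncomputable def partialTheta (q b : ℂ) : ℂ := ∑' n : ℕ, partialThetaTerm q b n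

theorem eq_zero_of_forall_eq_neg_mul_comp {f : ℂ → ℂ} {w : ℂ} {ρ M : ℝ} (hw : ‖w‖ ≤ 1)
    (hρ : ρ < 1) (hM : ∀ b : ℂ, ‖b‖ ≤ ρ → ‖f b‖ ≤ M)
    (hf : ∀ b : ℂ, ‖b‖ ≤ ρ → f b = -(b * w) * f (b * w)) {b : ℂ} (hb : ‖b‖ ≤ ρ) : f b = 0 := by
  have hρ₀ : 0 ≤ ρ := (norm_nonneg b).trans hb
  have hbw : ∀ b : ℂ, ‖b‖ ≤ ρ → ‖b * w‖ ≤ ρ := fun b hb =>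
    (norm_mul_le_norm_of_norm_le_one b hw).trans hb
  have hiter : ∀ N : ℕ, ∀ b : ℂ, ‖b‖ ≤ ρ → ‖f b‖ ≤ ρ ^ N * M := by
    intro N
    induction N with
    | zero => simpa using hM
    | succ N ih =>
      intro b hb
      rw [hf b hb, norm_mul, norm_neg, pow_succ', mul_assoc]
      exact mul_le_mul (hbw b hb) (ih _ (hbw b hb)) (norm_nonneg _) hρ₀
  have hlim : Tendsto (fun N : ℕ => ρ ^ N * M) atTop (𝓝 0) := by
    simpa using (tendsto_pow_atTop_nhds_zero_of_lt_one hρ₀ hρ).mul_const M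
  exact norm_le_zero_iff.1 (ge_of_tendsto' hlim fun N => hiter N b hb)

section

variable {q b : ℂ}

theorem norm_sq_lt_one (hq : ‖q‖ < 1) : ‖q ^ 2‖ < 1 := by
  rw [norm_pow]
  exact pow_lt_one₀ (norm_nonneg q) hq two_ne_zero

theorem exists_norm_heineTerm_le (hq : ‖q‖ < 1) {ρ : ℝ} (hρ : ρ < 1) :
    ∃ C : ℝ, ∀ b : ℂ, ‖b‖ ≤ ρ → ∀ n : ℕ, ‖heineTerm q b n‖ ≤ C * ρ ^ n := by
  refine ⟨Real.exp (‖q‖ / (1 - ‖q ^ 2‖)) * Real.exp (ρ / (1 - ‖q ^ 2‖)) /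
    Real.exp (-(ρ / (1 - ‖q‖) / (1 - ρ))), fun b hb n => ?_⟩
  have hbq : ‖b * q‖ ≤ ρ := (norm_mul_le_norm_of_norm_le_one b hq.le).trans hb
  have hA := norm_qPoch_le (x := q) le_rfl (norm_sq_lt_one hq) n
  have hB := norm_qPoch_le hbq (norm_sq_lt_one hq) n
  have hD := exp_neg_le_norm_qPoch (x := -(b * q)) (by rwa [norm_neg]) hρ hq (2 * n + 1)
  rw [heineTerm, norm_div, norm_mul, norm_mul, norm_pow, div_mul_eq_mul_div]
  have hρ₀ : 0 ≤ ρ := (norm_nonneg b).trans hb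
  gcongr

theorem summable_heineTerm (hq : ‖q‖ < 1) (hb : ‖b‖ < 1) : Summable (heineTerm q b) := by
  obtain ⟨C, hC⟩ := exists_norm_heineTerm_le hq hb
  exact Summable.of_norm_bounded ((summable_geometric_of_lt_one (norm_nonneg b) hb).mul_left C)
    (hC b le_rfl)

theorem tendsto_heineRemainder (hq : ‖q‖ < 1) (hb : ‖b‖ < 1) :
    Tendsto (heineRemainder q b) atTop (𝓝 0) := by
  have hterm := (summable_heineTerm hq hb).tendsto_atTop_zero
  have hpow : Tendsto (fun n : ℕ => q ^ (2 * n + 2)) atTop (𝓝 0) := by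
    simpa only [pow_add, pow_mul, zero_mul] using
      (tendsto_pow_atTop_nhds_zero_of_norm_lt_one (norm_sq_lt_one hq)).mul_const (q ^ 2)
  show Tendsto (fun n => heineTerm q b n * (1 - b ^ 2 * q ^ (2 * n + 2)) / (1 - b * q))
    atTop (𝓝 0)
  simpa using (hterm.mul (tendsto_const_nhds.sub (hpow.const_mul (b ^ 2)))).div_const (1 - b * q)

theorem heineSeries_eq (hq : ‖q‖ < 1) (hb : ‖b‖ < 1) :
    heineSeries q b = 1 - b * q ^ 2 * heineSeries q (b * q ^ 2) := by
  have hbq : ‖b * q‖ < 1 := (norm_mul_le_norm_of_norm_le_one b hq.le).trans_lt hb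
  have hbq₂ : ‖b * q ^ 2‖ < 1 := (norm_mul_pow_le_norm b hq.le 2).trans_lt hb
  have hsum := ((summable_heineTerm hq hb).hasSum.add
    ((summable_heineTerm hq hbq₂).hasSum.mul_left (b * q ^ 2))).tendsto_sum_nat
  have hpartial : ∀ N : ℕ,
      ∑ n ∈ range N, (heineTerm q b n + b * q ^ 2 * heineTerm q (b * q ^ 2) n) =
        1 - heineRemainder q b N := fun N => by
    simp only [heineTerm_add_mul_heineTerm hq hbq, sum_range_sub', heineRemainder_zero hbq]
  simp only [hpartial] at hsum
  have hlim := tendsto_nhds_unique hsum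
    (by simpa using (tendsto_heineRemainder hq hb).const_sub 1)
  simp only [heineSeries]
  linear_combination hlim

theorem norm_partialThetaTerm_le (hq : ‖q‖ < 1) (hb : ‖b‖ ≤ 1) (n : ℕ) :
    ‖partialThetaTerm q b n‖ ≤ ‖q‖ ^ n := by
  rw [partialThetaTerm, norm_mul, norm_mul, norm_pow, norm_pow, norm_pow, norm_neg, norm_one,
    one_pow, one_mul]
  calc ‖b‖ ^ n * ‖q‖ ^ (n * (n + 1)) ≤ ‖q‖ ^ (n * (n + 1)) :=
        mul_le_of_le_one_left (pow_nonneg (norm_nonneg q) _) (pow_le_one₀ (norm_nonneg b) hb)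
    _ ≤ ‖q‖ ^ n :=
        pow_le_pow_of_le_one (norm_nonneg q) hq.le (Nat.le_mul_of_pos_right n n.succ_pos)

theorem partialTheta_eq (hq : ‖q‖ < 1) (hb : ‖b‖ ≤ 1) :
    partialTheta q b = 1 - b * q ^ 2 * partialTheta q (b * q ^ 2) := by
  have hs : Summable (partialThetaTerm q b) :=
    Summable.of_norm_bounded (summable_geometric_of_lt_one (norm_nonneg q) hq)
      (norm_partialThetaTerm_le hq hb)
  have hshift : ∀ n : ℕ, partialThetaTerm q b (n + 1)
      = -(b * q ^ 2) * partialThetaTerm q (b * q ^ 2) n := fun n => by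
    rw [partialThetaTerm, partialThetaTerm,
      show (n + 1) * (n + 1 + 1) = n * (n + 1) + 2 * n + 2 by ring]
    ring
  rw [partialTheta, hs.tsum_eq_zero_add, tsum_congr hshift, tsum_mul_left, partialTheta,
    partialThetaTerm]
  ring

end

end LostNotebook

open LostNotebook

/-- Lost notebook identity obtained by a quadratic Heine transformation. -/
theorem stmt_15 (q a : ℂ) (hq : ‖q‖ < 1) (ha : ‖a‖ < 1) :
    ∑' n : ℕ, qPoch q (q ^ 2) n * qPoch (a * q) (q ^ 2) n * (a * q) ^ n /
        qPoch (-(a * q)) q (2 * n + 1)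
      = ∑' n : ℕ, (-1 : ℂ) ^ n * a ^ n * q ^ (n * (n + 1)) := by
  obtain ⟨C, hC⟩ := exists_norm_heineTerm_le hq ha
  have hbound : ∀ b : ℂ, ‖b‖ ≤ ‖a‖ →
      ‖heineSeries q b - partialTheta q b‖ ≤ C * (1 - ‖a‖)⁻¹ + (1 - ‖q‖)⁻¹ := fun b hb =>
    (norm_sub_le _ _).trans (add_le_add
      (tsum_of_norm_bounded ((hasSum_geometric_of_lt_one (norm_nonneg a) ha).mul_left C)
        (hC b hb))
      (tsum_of_norm_bounded (hasSum_geometric_of_lt_one (norm_nonneg q) hq)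
        (norm_partialThetaTerm_le hq (hb.trans ha.le))))
  have hfun : ∀ b : ℂ, ‖b‖ ≤ ‖a‖ → heineSeries q b - partialTheta q b
      = -(b * q ^ 2) * (heineSeries q (b * q ^ 2) - partialTheta q (b * q ^ 2)) := fun b hb => by
    rw [heineSeries_eq hq (hb.trans_lt ha), partialTheta_eq hq (hb.trans ha.le)]
    ring
  exact sub_eq_zero.1
    (eq_zero_of_forall_eq_neg_mul_comp (norm_sq_lt_one hq).le ha hbound hfun le_rfl)
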